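/- arXiv:cs/0010031 — 7 statements merged into one kernel-verified Lean document; each statement's English description precedes it below -/
import Mathlib

section
/- If a directed graph G is the union of two directed graphs G₁ and G₂ on the same vertex set (edge sets united), then β(G) ≤ β(G₁) + β(G₂). -/
/-- The set of successors of `u`. -/
def succSet {V : Type*} [Fintype V] (E : V → V → Prop) [DecidableRel E] (u : V) :
    Finset V := Finset.univ.filter fun v => E u v

/-- `β(u)`: the maximum size of an independent subset of `δ⁺(u)`. -/
def betaAt {V : Type*} [Fintype V] [DecidableEq V] (E : V → V → Prop) [DecidableRel E]
    (u : V) : ℕ :=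
  ((succSet E u).powerset.filter fun A : Finset V =>
    ∀ x ∈ A, ∀ y ∈ A, x ≠ y → ¬E x y ∧ ¬E y x).sup Finset.card

/-- `β(G)`: the directed local independence number. -/
def beta {V : Type*} [Fintype V] [DecidableEq V] (E : V → V → Prop) [DecidableRel E] : ℕ :=
  Finset.univ.sup fun u => betaAt E u

lemma card_le_betaAt {V : Type*} [Fintype V] [DecidableEq V] (E : V → V → Prop)
    [DecidableRel E] (u : V) (A : Finset V) (hsub : A ⊆ succSet E u)
    (hind : ∀ x ∈ A, ∀ y ∈ A, x ≠ y → ¬E x y ∧ ¬E y x) : A.card ≤ betaAt E u := by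
  apply Finset.le_sup (f := Finset.card)
  simp only [Finset.mem_filter, Finset.mem_powerset]
  exact ⟨hsub, hind⟩

lemma betaAt_le_beta {V : Type*} [Fintype V] [DecidableEq V] (E : V → V → Prop)
    [DecidableRel E] (u : V) : betaAt E u ≤ beta E :=
  Finset.le_sup (Finset.mem_univ u)

/-- If `G = G₁ ∪ G₂` (same vertex set, edge sets united) then
`β(G) ≤ β(G₁) + β(G₂)`. -/
theorem stmt_2 {V : Type*} [Fintype V] [DecidableEq V]
    (E₁ E₂ : V → V → Prop) [DecidableRel E₁] [DecidableRel E₂] :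
    @beta V _ _ (fun u v => E₁ u v ∨ E₂ u v) (fun _ _ => instDecidableOr) ≤
      beta E₁ + beta E₂ := by
  apply Finset.sup_le
  intro u _
  apply Finset.sup_le
  intro A hA
  simp only [Finset.mem_filter, Finset.mem_powerset] at hA
  obtain ⟨hsub, hind⟩ := hA
  classical
  set A₁ := A.filter fun v => E₁ u v with hA₁
  set A₂ := A \ A₁ with hA₂
  have hle : (A.filter fun v => E₁ u v).card ≤ A.card :=
    Finset.card_le_card (Finset.filter_subset _ _)
  have hcard : A.card = A₁.card + A₂.card := by
    rw [hA₂, hA₁, Finset.card_sdiff_of_subset (Finset.filter_subset _ _)]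
    omega
  have h1 : A₁.card ≤ betaAt E₁ u := by
    apply card_le_betaAt
    · intro x hx
      simp only [hA₁, Finset.mem_filter] at hx
      simp [succSet, hx.2]
    · intro x hx y hy hxy
      simp only [hA₁, Finset.mem_filter] at hx hy
      have := hind x hx.1 y hy.1 hxy
      tauto
  have h2 : A₂.card ≤ betaAt E₂ u := by
    apply card_le_betaAt
    · intro x hx
      simp only [hA₂, hA₁, Finset.mem_sdiff, Finset.mem_filter] at hx
      have hx2 : E₂ u x := by
        have := hsub hx.1
        simp only [succSet, Finset.mem_filter] at this
        tauto
      simp [succSet, hx2]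
    · intro x hx y hy hxy
      simp only [hA₂, Finset.mem_sdiff] at hx hy
      have := hind x hx.1 y hy.1 hxy
      tauto
  calc A.card = A₁.card + A₂.card := hcard
    _ ≤ betaAt E₁ u + betaAt E₂ u := Nat.add_le_add h1 h2
    _ ≤ beta E₁ + beta E₂ := Nat.add_le_add (betaAt_le_beta _ _) (betaAt_le_beta _ _)
end

section
/- If G is the intersection graph of a finite family of connected vertex subsets of an undirected graph H of treewidth k, then there is an acyclic orientation G' of G with β(G') ≤ k + 1. -/
open SimpleGraph

section TreeHelpers
variable {ι : Type*} [DecidableEq ι] {T : SimpleGraph ι}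

private lemma my_path_length_eq_dist (hc : T.Connected) (ha : T.IsAcyclic) {a b : ι}
    (p : T.Walk a b) (hp : p.IsPath) : p.length = T.dist a b := by
  obtain ⟨w, hw⟩ := hc.exists_walk_length_eq_dist a b
  have hpe : (⟨p, hp⟩ : T.Path a b) = ⟨w.bypass, w.bypass_isPath⟩ := ha.path_unique _ _
  have hpw : p = w.bypass := congrArg Subtype.val hpe
  refine le_antisymm ?_ (SimpleGraph.dist_le p)
  calc p.length = w.bypass.length := by rw [hpw]
    _ ≤ w.length := w.length_bypass_le
    _ = T.dist a b := hw

private lemma my_dist_split (hc : T.Connected) (ha : T.IsAcyclic) {a b c : ι}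
    (p : T.Walk a b) (hp : p.IsPath) (hcm : c ∈ p.support) :
    T.dist a b = T.dist a c + T.dist c b := by
  have h1 := my_path_length_eq_dist hc ha _ (hp.takeUntil hcm)
  have h2 := my_path_length_eq_dist hc ha _ (hp.dropUntil hcm)
  have h3 := my_path_length_eq_dist hc ha p hp
  have hspec := SimpleGraph.Walk.take_spec p hcm
  have hlen : (p.takeUntil c hcm).length + (p.dropUntil c hcm).length = p.length := by
    conv_rhs => rw [← hspec]
    rw [SimpleGraph.Walk.length_append]
  omega

private lemma my_convex (ha : T.IsAcyclic) {a b : ι} {S : Set ι}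
    (w : T.Walk a b) (hw : ∀ x ∈ w.support, x ∈ S)
    (p : T.Walk a b) (hp : p.IsPath) : ∀ x ∈ p.support, x ∈ S := by
  have hpe : (⟨p, hp⟩ : T.Path a b) = ⟨w.bypass, w.bypass_isPath⟩ := ha.path_unique _ _
  have hpw : p = w.bypass := congrArg Subtype.val hpe
  intro x hx
  exact hw x (w.support_bypass_subset (hpw ▸ hx))

private lemma my_factA (hc : T.Connected) (ha : T.IsAcyclic) (r : ι) (S : Set ι) :
    ∀ {a m : ι} (p : T.Walk a m), (∀ s ∈ S, T.dist m r ≤ T.dist s r) →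
      p.IsPath → (∀ x ∈ p.support, x ∈ S) →
      ∃ q : T.Walk a r, q.IsPath ∧ m ∈ q.support := by
  intro a m p
  induction p with
  | nil =>
    rename_i m
    intro _ _ _
    obtain ⟨w, hw⟩ := hc.exists_walk_length_eq_dist m r
    exact ⟨w.bypass, w.bypass_isPath, w.bypass.start_mem_support⟩
  | @cons a b m h p ih =>
    intro hmin hp hsupp
    have haS : a ∈ S := hsupp a (Walk.start_mem_support _)
    obtain ⟨qb, hqb, hmqb⟩ := ih hmin hp.of_cons
      (fun x hx => hsupp x (by simp [Walk.support_cons, hx]))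
    by_cases hab : a ∈ qb.support
    · have htake : qb.takeUntil a hab = Walk.cons h.symm Walk.nil := by
        have h1 : (qb.takeUntil a hab).IsPath := hqb.takeUntil hab
        have h2 : (Walk.cons h.symm (Walk.nil : T.Walk a a)).IsPath := by
          simp [Walk.cons_isPath_iff, h.ne']
        exact congrArg Subtype.val
          (ha.path_unique (⟨_, h1⟩ : T.Path b a) ⟨_, h2⟩)
      have hsplit : m ∈ (qb.takeUntil a hab).support ∨ m ∈ (qb.dropUntil a hab).support := by
        rw [← Walk.take_spec qb hab] at hmqb
        exact (Walk.mem_support_append_iff _ _).mp hmqb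
      rcases hsplit with hm1 | hm2
      · rw [htake] at hm1
        simp only [Walk.support_cons, Walk.support_nil, List.mem_cons, List.mem_singleton] at hm1
        rcases hm1 with hm1 | hm1 | hm1
        · subst hm1
          obtain ⟨w0, hw0⟩ := hc.exists_walk_length_eq_dist a r
          by_cases hbw : m ∈ w0.bypass.support
          · exact ⟨w0.bypass, w0.bypass_isPath, hbw⟩
          · exfalso
            have hq1 : (Walk.cons h.symm w0.bypass).IsPath := by
              rw [Walk.cons_isPath_iff]
              exact ⟨w0.bypass_isPath, hbw⟩
            have hl : (Walk.cons h.symm w0.bypass).length = T.dist m r :=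
              my_path_length_eq_dist hc ha _ hq1
            have hl2 : w0.bypass.length = T.dist a r :=
              my_path_length_eq_dist hc ha _ w0.bypass_isPath
            have := hmin a haS
            simp only [Walk.length_cons] at hl
            omega
        · subst hm1
          obtain ⟨w0, hw0⟩ := hc.exists_walk_length_eq_dist m r
          exact ⟨w0.bypass, w0.bypass_isPath, w0.bypass.start_mem_support⟩
        · simp at hm1
      · exact ⟨qb.dropUntil a hab, hqb.dropUntil hab, hm2⟩
    · exact ⟨Walk.cons h qb, by rw [Walk.cons_isPath_iff]; exact ⟨hqb, hab⟩,
        by simp [Walk.support_cons, hmqb]⟩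

private lemma my_key (hc : T.Connected) (ha : T.IsAcyclic) (r : ι) (S₁ S₂ : Set ι)
    (hW₁ : ∀ t ∈ S₁, ∀ t' ∈ S₁, ∃ w : T.Walk t t', ∀ x ∈ w.support, x ∈ S₁)
    (hW₂ : ∀ t ∈ S₂, ∀ t' ∈ S₂, ∃ w : T.Walk t t', ∀ x ∈ w.support, x ∈ S₂)
    {m₁ m₂ a : ι} (hm₁S : m₁ ∈ S₁) (hm₂S : m₂ ∈ S₂)
    (hmin₁ : ∀ s ∈ S₁, T.dist m₁ r ≤ T.dist s r)
    (hmin₂ : ∀ s ∈ S₂, T.dist m₂ r ≤ T.dist s r)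
    (ha₁ : a ∈ S₁) (ha₂ : a ∈ S₂)
    (hle : T.dist m₂ r ≤ T.dist m₁ r) : m₁ ∈ S₂ := by
  obtain ⟨w₁, hw₁⟩ := hW₁ a ha₁ m₁ hm₁S
  obtain ⟨q₁, hq₁, hm₁q⟩ := my_factA hc ha r S₁ w₁.bypass hmin₁ w₁.bypass_isPath
    (fun x hx => hw₁ x (w₁.support_bypass_subset hx))
  obtain ⟨w₂, hw₂⟩ := hW₂ a ha₂ m₂ hm₂S
  obtain ⟨q₂, hq₂, hm₂q⟩ := my_factA hc ha r S₂ w₂.bypass hmin₂ w₂.bypass_isPath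
    (fun x hx => hw₂ x (w₂.support_bypass_subset hx))
  have heq : q₂ = q₁ := congrArg Subtype.val (ha.path_unique (⟨q₂, hq₂⟩ : T.Path a r) ⟨q₁, hq₁⟩)
  subst heq
  have hsplit : m₁ ∈ (q₂.takeUntil m₂ hm₂q).support ∨ m₁ ∈ (q₂.dropUntil m₂ hm₂q).support := by
    rw [← Walk.take_spec q₂ hm₂q] at hm₁q
    exact (Walk.mem_support_append_iff _ _).mp hm₁q
  rcases hsplit with hm | hm
  · exact my_convex ha w₂ hw₂ (q₂.takeUntil m₂ hm₂q) (hq₂.takeUntil hm₂q) m₁ hm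
  · have hs := my_dist_split hc ha _ (hq₂.dropUntil hm₂q) hm
    have h0 : T.dist m₂ m₁ = 0 := by omega
    have hmm : m₂ = m₁ := (hc.dist_eq_zero_iff).mp h0
    exact hmm ▸ hm₂S
end TreeHelpers

section ChainHelpers
variable {V ι : Type*} [DecidableEq ι] {H : SimpleGraph V} {T : SimpleGraph ι}

private lemma my_bagwalk (hT : T.IsTree) (Vt : ι → Finset V)
    (h3 : ∀ (t₁ t₃ : ι) (p : T.Walk t₁ t₃), p.IsPath →
      ∀ t₂ ∈ p.support, ∀ v : V, v ∈ Vt t₁ → v ∈ Vt t₃ → v ∈ Vt t₂)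
    {v : V} {t t' : ι} (hv : v ∈ Vt t) (hv' : v ∈ Vt t') :
    ∃ w : T.Walk t t', ∀ x ∈ w.support, v ∈ Vt x := by
  obtain ⟨w0⟩ := hT.isConnected t t'
  exact ⟨w0.bypass, fun x hx => h3 t t' w0.bypass w0.bypass_isPath x hx v hv hv'⟩

private lemma my_chainwalk (hT : T.IsTree) (Vt : ι → Finset V)
    (h2 : ∀ u v : V, H.Adj u v → ∃ t, u ∈ Vt t ∧ v ∈ Vt t)
    (h3 : ∀ (t₁ t₃ : ι) (p : T.Walk t₁ t₃), p.IsPath →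
      ∀ t₂ ∈ p.support, ∀ v : V, v ∈ Vt t₁ → v ∈ Vt t₃ → v ∈ Vt t₂)
    (AS : Set V) :
    ∀ {v v' : V} (W : H.Walk v v'), (∀ z ∈ W.support, z ∈ AS) →
      ∀ t t', v ∈ Vt t → v' ∈ Vt t' →
      ∃ w : T.Walk t t', ∀ x ∈ w.support, ∃ u ∈ AS, u ∈ Vt x := by
  intro v v' W
  induction W with
  | nil =>
    rename_i v
    intro hsupp t t' hv hv'
    obtain ⟨w, hw⟩ := my_bagwalk hT Vt h3 hv hv'
    exact ⟨w, fun x hx => ⟨v, hsupp v (Walk.start_mem_support _), hw x hx⟩⟩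
  | @cons v u v' hadj W' ih =>
    intro hsupp t t' hv hv'
    obtain ⟨s, hvs, hus⟩ := h2 v u hadj
    obtain ⟨w₁, hw₁⟩ := my_bagwalk hT Vt h3 hv hvs
    obtain ⟨w₂, hw₂⟩ := ih (fun z hz => hsupp z (by simp [Walk.support_cons, hz])) s t' hus hv'
    refine ⟨w₁.append w₂, fun x hx => ?_⟩
    rcases (Walk.mem_support_append_iff _ _).mp hx with hmem | hmem
    · exact ⟨v, hsupp v (Walk.start_mem_support _), hw₁ x hmem⟩
    · exact hw₂ x hmem
end ChainHelpers

/-- If `G` is the intersection graph of a finite family of connected vertex subsets of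
a graph `H` of treewidth `k` (witnessed by a tree decomposition with bags of size at most
`k + 1`), then there is an acyclic orientation `E'` of `G` with `β(E') ≤ k + 1`. -/
theorem stmt_6 {V ι ι' : Type*} [Fintype V] [DecidableEq V] [Fintype ι] [Fintype ι']
    (H : SimpleGraph V) (k : ℕ)
    (T : SimpleGraph ι) (hT : T.IsTree) (Vt : ι → Finset V)
    (h1 : ∀ v : V, ∃ t, v ∈ Vt t)
    (h2 : ∀ u v : V, H.Adj u v → ∃ t, u ∈ Vt t ∧ v ∈ Vt t)
    (h3 : ∀ (t₁ t₃ : ι) (p : T.Walk t₁ t₃), p.IsPath →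
      ∀ t₂ ∈ p.support, ∀ v : V, v ∈ Vt t₁ → v ∈ Vt t₃ → v ∈ Vt t₂)
    (hwidth : ∀ t, (Vt t).card ≤ k + 1)
    (A : ι' → Finset V) (hinj : Function.Injective A)
    (hne : ∀ i, (A i).Nonempty)
    (hconn : ∀ i : ι', ∀ x ∈ A i, ∀ y ∈ A i,
      ∃ p : H.Walk x y, ∀ z ∈ p.support, z ∈ A i) :
    ∃ E' : ι' → ι' → Prop,
      (∀ i j, E' i j → i ≠ j ∧ (A i ∩ A j).Nonempty) ∧
      (∀ i j, i ≠ j → (A i ∩ A j).Nonempty → (E' i j ∨ E' j i)) ∧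
      (∃ f : ι' → ℕ, ∀ i j, E' i j → f i < f j) ∧
      (∀ i : ι', ∀ J : Finset ι',
        (∀ j ∈ J, E' i j) →
        (∀ j ∈ J, ∀ j' ∈ J, j ≠ j' → A j ∩ A j' = ∅) → J.card ≤ k + 1) := by
  classical
  have hc : T.Connected := hT.isConnected
  have hacyc : T.IsAcyclic := hT.2
  haveI : Nonempty ι := hc.nonempty
  rcases isEmpty_or_nonempty ι' with hE | hNE
  · exact ⟨fun _ _ => False, fun i j h => h.elim, fun i => isEmptyElim i,
      ⟨fun _ => 0, fun i j h => h.elim⟩, fun i => isEmptyElim i⟩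
  -- root
  set r : ι := Classical.arbitrary ι with hr
  -- subtrees
  set S : ι' → Set ι := fun i => {t | ∃ v ∈ A i, v ∈ Vt t} with hS
  have hSconn : ∀ i, ∀ t ∈ S i, ∀ t' ∈ S i,
      ∃ w : T.Walk t t', ∀ x ∈ w.support, x ∈ S i := by
    intro i t ht t' ht'
    obtain ⟨v, hvA, hvt⟩ := ht
    obtain ⟨v', hv'A, hv't⟩ := ht'
    obtain ⟨W, hW⟩ := hconn i v hvA v' hv'A
    exact my_chainwalk hT Vt h2 h3 (↑(A i)) W (fun z hz => by exact_mod_cast hW z hz) t t' hvt hv't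
  -- the top nodes
  have hm : ∀ i : ι', ∃ t, t ∈ S i ∧ ∀ s ∈ S i, T.dist t r ≤ T.dist s r := by
    intro i
    obtain ⟨v, hv⟩ := hne i
    obtain ⟨t₀, ht₀⟩ := h1 v
    obtain ⟨t, ht, hmin⟩ := Finset.exists_min_image
      (Finset.univ.filter fun t => t ∈ S i) (fun t => T.dist t r)
      ⟨t₀, by simp only [Finset.mem_filter, Finset.mem_univ, true_and]; exact ⟨v, hv, ht₀⟩⟩
    refine ⟨t, (Finset.mem_filter.mp ht).2, fun s hs => hmin s ?_⟩
    simp only [Finset.mem_filter, Finset.mem_univ, true_and]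
    exact hs
  choose m hmS hmmin using hm
  -- depth bound
  set N : ℕ := Fintype.card ι with hN
  have hDN : ∀ t : ι, T.dist t r ≤ N := by
    intro t
    obtain ⟨p, hp, hlen⟩ := (hc t r).exists_path_of_dist
    have h1' : p.support.length = p.length + 1 := p.length_support
    have h2' : p.support.length ≤ N := by
      rw [← List.toFinset_card_of_nodup hp.support_nodup]
      exact le_trans (Finset.card_le_univ _) (le_of_eq Finset.card_univ)
    omega
  set n : ℕ := Fintype.card ι' with hn
  have hnpos : 0 < n := Fintype.card_pos
  set e : ι' ≃ Fin n := Fintype.equivFin ι' with he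
  set f : ι' → ℕ := fun i => (N - T.dist (m i) r) * n + (e i : ℕ) with hf
  have hfmod : ∀ i, f i % n = (e i : ℕ) := by
    intro i
    show ((N - T.dist (m i) r) * n + (e i : ℕ)) % n = (e i : ℕ)
    rw [add_comm, Nat.add_mul_mod_self_right]
    exact Nat.mod_eq_of_lt (e i).isLt
  have hfinj : Function.Injective f := by
    intro i j hij
    have : (e i : ℕ) = (e j : ℕ) := by rw [← hfmod i, ← hfmod j, hij]
    exact e.injective (Fin.ext this)
  have hfd : ∀ i j, f i < f j → T.dist (m j) r ≤ T.dist (m i) r := by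
    intro i j hij
    by_contra hlt
    push_neg at hlt
    have hdj := hDN (m j)
    have hsub : N - T.dist (m j) r + 1 ≤ N - T.dist (m i) r := by omega
    have : f j < f i := by
      calc f j = (N - T.dist (m j) r) * n + (e j : ℕ) := rfl
        _ < (N - T.dist (m j) r) * n + n := by
            exact Nat.add_lt_add_left (e j).isLt _
        _ = (N - T.dist (m j) r + 1) * n := by ring
        _ ≤ (N - T.dist (m i) r) * n := Nat.mul_le_mul_right n hsub
        _ ≤ f i := Nat.le_add_right _ _
    omega
  refine ⟨fun i j => (A i ∩ A j).Nonempty ∧ f i < f j, ?_, ?_, ⟨f, fun i j h => h.2⟩, ?_⟩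
  · rintro i j ⟨hint, hlt⟩
    exact ⟨fun h => by subst h; exact lt_irrefl _ hlt, hint⟩
  · intro i j hij hint
    rcases lt_or_gt_of_ne (fun h => hij (hfinj h)) with h | h
    · exact Or.inl ⟨hint, h⟩
    · exact Or.inr ⟨by rwa [Finset.inter_comm] at hint, h⟩
  · intro i J hJ hdis
    have hmem : ∀ j ∈ J, ∃ v, v ∈ A j ∧ v ∈ Vt (m i) := by
      intro j hj
      obtain ⟨hint, hlt⟩ := hJ j hj
      obtain ⟨v, hv⟩ := hint
      have hvi : v ∈ A i := (Finset.mem_inter.mp hv).1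
      have hvj : v ∈ A j := (Finset.mem_inter.mp hv).2
      obtain ⟨a, hva⟩ := h1 v
      have hkey : m i ∈ S j := my_key hc hacyc r (S i) (S j)
        (hSconn i) (hSconn j) (hmS i) (hmS j) (hmmin i) (hmmin j)
        ⟨v, hvi, hva⟩ ⟨v, hvj, hva⟩ (hfd i j hlt)
      obtain ⟨u, huA, huV⟩ := hkey
      exact ⟨u, huA, huV⟩
    choose g hg1 hg2 using hmem
    obtain ⟨v₀, hv₀⟩ := hne i
    set g' : ι' → V := fun j => if h : j ∈ J then g j h else v₀ with hg'
    have hmap : ∀ j ∈ J, g' j ∈ Vt (m i) := by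
      intro j hj
      show (if h : j ∈ J then g j h else v₀) ∈ Vt (m i)
      rw [dif_pos hj]
      exact hg2 j hj
    have hginj : Set.InjOn g' ↑J := by
      intro j hj j' hj' hgg
      by_contra hne'
      have h1' : g' j ∈ A j := by
        show (if h : j ∈ J then g j h else v₀) ∈ A j
        rw [dif_pos (Finset.mem_coe.mp hj)]
        exact hg1 j (Finset.mem_coe.mp hj)
      have h2' : g' j ∈ A j' := by
        rw [hgg]
        show (if h : j' ∈ J then g j' h else v₀) ∈ A j'
        rw [dif_pos (Finset.mem_coe.mp hj')]
        exact hg1 j' (Finset.mem_coe.mp hj')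
      have : g' j ∈ A j ∩ A j' := Finset.mem_inter.mpr ⟨h1', h2'⟩
      rw [hdis j hj j' hj' hne'] at this
      exact Finset.notMem_empty _ this
    calc J.card ≤ (Vt (m i)).card := Finset.card_le_card_of_injOn g' hmap hginj
      _ ≤ k + 1 := hwidth (m i)
end

section
/- Let G be a finite undirected graph with weights wt : V → ℝ and let A be any independent set of G. Orient G so that all nodes of A precede all nodes not in A. Then the opportunity cost algorithm applied to this orientation outputs an independent set A' with wt(A') ≥ wt(A). In particular, for suitable orientation the algorithm outputs a maximum weight independent set. -/
/-!
Nodes of `A` have no predecessors, so `val = wt` on `A` and `wt(A) ≤ ∑ᵤ max 0 (val u)`.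
Each selected node `u` has `wt u = val u + ∑_{v → u} max 0 (val v)`, and every unselected
node of positive value has a selected successor, so the selected nodes pay for the whole
sum `∑ᵤ max 0 (val u)`; hence `wt(A) ≤ wt(A')`. The output is independent because every edge
is oriented one way and a selected node has no selected successor.
-/

open Finset

theorem Finset.sum_le_sum_sum_filter_of_exists_rel {α M : Type*} [Fintype α]
    [AddCommMonoid M] [PartialOrder M] [IsOrderedAddMonoid M]
    {r : α → α → Prop} [DecidableRel r] {p : α → M} (hp : ∀ v, 0 ≤ p v) {T S : Finset α}
    (h : ∀ v ∈ T, 0 < p v → ∃ s ∈ S, r v s) :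
    ∑ v ∈ T, p v ≤ ∑ s ∈ S, ∑ v ∈ univ.filter (r · s), p v := by
  have hswap : ∑ s ∈ S, ∑ v ∈ univ.filter (r · s), p v
      = ∑ v, ∑ s ∈ S.filter (r v ·), p v :=
    Finset.sum_comm' fun s v => by simp [and_comm]
  rw [hswap]
  refine (sum_le_sum fun v hv => ?_).trans
    (sum_le_sum_of_subset_of_nonneg (subset_univ T) fun v _ _ => sum_nonneg fun _ _ => hp v)
  rcases (hp v).lt_or_eq with hpos | hzero
  · obtain ⟨s, hs, hrs⟩ := h v hv hpos
    exact single_le_sum (f := fun _ => p v) (fun _ _ => hp v) (mem_filter.2 ⟨hs, hrs⟩)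
  · exact hzero ▸ sum_nonneg fun _ _ => le_rfl

theorem opportunityCost_not_adj_of_select {V : Type*} {E : V → V → Prop} {select : V → Prop}
    {H : SimpleGraph V}
    (hE : ∀ u v, H.Adj u v → E u v ∨ E v u) (hsel : ∀ u, select u → ∀ v, E u v → ¬select v)
    {x y : V} (hx : select x) (hy : select y) : ¬H.Adj x y := fun hxy =>
  (hE x y hxy).elim (fun h => hsel x hx y h hy) (fun h => hsel y hy x h hx)

section OpportunityCost

variable {V : Type*} [Fintype V] {E : V → V → Prop} [DecidableRel E] {wt val : V → ℝ}
  {select : V → Prop} [DecidablePred select]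

theorem opportunityCost_val_eq_wt_of_no_pred
    (hval : ∀ u, val u = wt u - ∑ v ∈ univ.filter (fun v => E v u), max 0 (val v))
    {u : V} (hu : ∀ v, ¬E v u) : val u = wt u := by
  rw [hval u, filter_false_of_mem fun v _ => hu v, sum_empty, sub_zero]

/-- Holds for any relation `E`: acyclicity is only needed for `val` and `select` to exist. -/
theorem opportunityCost_sum_max_zero_val_le_sum_wt_select
    (hval : ∀ u, val u = wt u - ∑ v ∈ univ.filter (fun v => E v u), max 0 (val v))
    (hsel : ∀ u, select u ↔ (0 ≤ val u ∧ ∀ v, E u v → ¬select v)) :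
    ∑ u, max 0 (val u) ≤ ∑ u ∈ univ.filter select, wt u := by
  have hselected : ∑ u ∈ univ.filter select, max 0 (val u) = ∑ u ∈ univ.filter select, val u :=
    sum_congr rfl fun u hu => max_eq_right ((hsel u).1 (mem_filter.1 hu).2).1
  have hunselected : ∑ u ∈ univ.filter (¬select ·), max 0 (val u)
      ≤ ∑ s ∈ univ.filter select, ∑ v ∈ univ.filter (E · s), max 0 (val v) := by
    refine sum_le_sum_sum_filter_of_exists_rel (fun _ => le_max_left _ _) fun v hv hpos => ?_
    have hnot : ¬select v := (mem_filter.1 hv).2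
    have hval_nonneg : 0 ≤ val v := ((lt_max_iff.1 hpos).resolve_left (lt_irrefl 0)).le
    by_contra! hno
    exact hnot ((hsel v).2 ⟨hval_nonneg, fun s hs hsel_s => hno s (by simpa using hsel_s) hs⟩)
  have hwt : ∑ u ∈ univ.filter select, wt u = ∑ u ∈ univ.filter select, val u
      + ∑ s ∈ univ.filter select, ∑ v ∈ univ.filter (E · s), max 0 (val v) := by
    rw [← sum_add_distrib]
    exact sum_congr rfl fun u _ => by rw [hval u]; ring
  calc ∑ u, max 0 (val u)
      = ∑ u ∈ univ.filter select, max 0 (val u)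
        + ∑ u ∈ univ.filter (¬select ·), max 0 (val u) :=
        (sum_filter_add_sum_filter_not _ _ _).symm
    _ ≤ ∑ u ∈ univ.filter select, wt u := by rw [hselected, hwt]; gcongr

end OpportunityCost

theorem stmt_10_general {V : Type*} [Fintype V]
    (H : SimpleGraph V) (wt : V → ℝ)
    (A : Finset V) (hA : ∀ x ∈ A, ∀ y ∈ A, ¬H.Adj x y)
    (f : V → ℕ) (hfinj : Function.Injective f)
    (hAfirst : ∀ u ∈ A, ∀ v : V, v ∉ A → f u < f v)
    (E : V → V → Prop) [DecidableRel E]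
    (hE : ∀ u v : V, E u v ↔ H.Adj u v ∧ f u < f v)
    (val : V → ℝ)
    (hval : ∀ u, val u = wt u - ∑ v ∈ Finset.univ.filter (fun v => E v u), max 0 (val v))
    (select : V → Prop) [DecidablePred select]
    (hsel : ∀ u, select u ↔ (0 ≤ val u ∧ ∀ v, E u v → ¬select v)) :
    (∀ x ∈ Finset.univ.filter select, ∀ y ∈ Finset.univ.filter select, ¬H.Adj x y) ∧
    ∑ u ∈ A, wt u ≤ ∑ u ∈ Finset.univ.filter select, wt u := by
  have horient : ∀ u v, H.Adj u v → E u v ∨ E v u := fun u v huv =>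
    ((hfinj.ne (H.ne_of_adj huv)).lt_or_gt).imp (fun h => (hE u v).2 ⟨huv, h⟩)
      (fun h => (hE v u).2 ⟨huv.symm, h⟩)
  have hA_no_pred : ∀ u ∈ A, ∀ v, ¬E v u := fun u hu v hvu => by
    obtain ⟨hvu, hlt⟩ := (hE v u).1 hvu
    by_cases hv : v ∈ A
    · exact hA v hv u hu hvu
    · exact (hAfirst u hu v hv).not_gt hlt
  refine ⟨fun x hx y hy => opportunityCost_not_adj_of_select horient
    (fun u hu => ((hsel u).1 hu).2) (mem_filter.1 hx).2 (mem_filter.1 hy).2, ?_⟩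
  calc ∑ u ∈ A, wt u = ∑ u ∈ A, val u :=
        sum_congr rfl fun u hu => (opportunityCost_val_eq_wt_of_no_pred hval (hA_no_pred u hu)).symm
    _ ≤ ∑ u ∈ A, max 0 (val u) := sum_le_sum fun _ _ => le_max_right _ _
    _ ≤ ∑ u, max 0 (val u) :=
        sum_le_sum_of_subset_of_nonneg (subset_univ A) fun _ _ _ => le_max_left _ _
    _ ≤ ∑ u ∈ univ.filter select, wt u :=
        opportunityCost_sum_max_zero_val_le_sum_wt_select hval hsel

/-- If `A` is an independent set of an undirected weighted graph `H`, and `G` is the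
orientation of `H` along an order in which all nodes of `A` precede all nodes not in
`A` (edges oriented from earlier to later), then the opportunity cost algorithm
outputs an independent set `A' = {u : select u}` with `wt(A') ≥ wt(A)`. -/
theorem stmt_10 {V : Type*} [Fintype V] [DecidableEq V]
    (H : SimpleGraph V) [DecidableRel H.Adj] (wt : V → ℝ)
    (A : Finset V) (hA : ∀ x ∈ A, ∀ y ∈ A, ¬H.Adj x y)
    (f : V → ℕ) (hfinj : Function.Injective f)
    (hAfirst : ∀ u ∈ A, ∀ v : V, v ∉ A → f u < f v)
    (E : V → V → Prop) [DecidableRel E]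
    (hE : ∀ u v : V, E u v ↔ H.Adj u v ∧ f u < f v)
    (val : V → ℝ)
    (hval : ∀ u, val u = wt u - ∑ v ∈ Finset.univ.filter (fun v => E v u), max 0 (val v))
    (select : V → Prop) [DecidablePred select]
    (hsel : ∀ u, select u ↔ (0 ≤ val u ∧ ∀ v, E u v → ¬select v)) :
    (∀ x ∈ Finset.univ.filter select, ∀ y ∈ Finset.univ.filter select, ¬H.Adj x y) ∧
    ∑ u ∈ A, wt u ≤ ∑ u ∈ Finset.univ.filter select, wt u :=
  stmt_10_general H wt A hA f hfinj hAfirst E hE val hval select hsel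
end

section
/- If all nodes of an undirected weighted graph G have distinct positive weights and G is oriented in order of decreasing weight, then the opportunity cost algorithm returns exactly the independent set chosen by the greedy algorithm (which repeatedly selects the heaviest remaining node and deletes its neighbors). -/
/-- If all nodes of a graph have distinct positive weights and the graph is oriented
in order of decreasing weight, then the opportunity cost algorithm selects exactly the
same nodes as the greedy algorithm. -/
theorem stmt_11 {V : Type*} [Fintype V] [DecidableEq V]
    (H : SimpleGraph V) [DecidableRel H.Adj] (wt : V → ℝ)
    (hpos : ∀ v, 0 < wt v) (hinj : Function.Injective wt)
    (E : V → V → Prop) [DecidableRel E]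
    (hE : ∀ u v : V, E u v ↔ H.Adj u v ∧ wt v < wt u)
    (val : V → ℝ)
    (hval : ∀ u, val u = wt u - ∑ v ∈ Finset.univ.filter (fun v => E v u), max 0 (val v))
    (select : V → Prop)
    (hsel : ∀ u, select u ↔ (0 ≤ val u ∧ ∀ v, E u v → ¬select v))
    (greedy : V → Prop)
    (hgreedy : ∀ u, greedy u ↔ ∀ v, E v u → ¬greedy v) :
    ∀ u, select u ↔ greedy u := by
  classical
  -- if v is heavier than u, the set of vertices heavier than v is strictly smaller
  have hcard_heavy : ∀ u v : V, wt u < wt v →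
      (Finset.univ.filter (fun w => wt v < wt w)).card <
      (Finset.univ.filter (fun w => wt u < wt w)).card := by
    intro u v huv
    apply Finset.card_lt_card
    constructor
    · intro w hw
      simp only [Finset.mem_filter, Finset.mem_univ, true_and] at hw ⊢
      linarith
    · intro hsub
      have := hsub (by simp [huv] : v ∈ Finset.univ.filter (fun w => wt u < wt w))
      simp at this
  have hcard_light : ∀ u v : V, wt v < wt u →
      (Finset.univ.filter (fun w => wt w < wt v)).card <
      (Finset.univ.filter (fun w => wt w < wt u)).card := by
    intro u v huv
    apply Finset.card_lt_card
    constructor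
    · intro w hw
      simp only [Finset.mem_filter, Finset.mem_univ, true_and] at hw ⊢
      linarith
    · intro hsub
      have := hsub (by simp [huv] : v ∈ Finset.univ.filter (fun w => wt w < wt u))
      simp at this
  -- key claim: val u = wt u if greedy u, val u < 0 otherwise
  have key : ∀ n : ℕ, ∀ u : V,
      (Finset.univ.filter (fun w => wt u < wt w)).card < n →
      (greedy u → val u = wt u) ∧ (¬greedy u → val u < 0) := by
    intro n
    induction n with
    | zero => intro u hu; omega
    | succ n ih =>
      intro u hu
      constructor
      · intro hg
        have hsum : ∑ v ∈ Finset.univ.filter (fun v => E v u), max 0 (val v) = 0 := by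
          apply Finset.sum_eq_zero
          intro v hv
          simp only [Finset.mem_filter, Finset.mem_univ, true_and] at hv
          have hwu : wt u < wt v := ((hE v u).mp hv).2
          have hng : ¬greedy v := (hgreedy u).mp hg v hv
          have hvlt : val v < 0 := (ih v (by
            have := hcard_heavy u v hwu; omega)).2 hng
          simp [max_eq_left hvlt.le]
        rw [hval u, hsum]; ring
      · intro hng
        rw [hgreedy u] at hng
        push_neg at hng
        obtain ⟨v, hEvu, hgv⟩ := hng
        have hwu : wt u < wt v := ((hE v u).mp hEvu).2
        have hvv : val v = wt v := (ih v (by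
          have := hcard_heavy u v hwu; omega)).1 hgv
        have hmem : v ∈ Finset.univ.filter (fun v => E v u) := by
          simp [hEvu]
        have hle : max 0 (val v) ≤
            ∑ w ∈ Finset.univ.filter (fun w => E w u), max 0 (val w) :=
          Finset.single_le_sum (fun w _ => le_max_left 0 (val w)) hmem
        have : wt v ≤ ∑ w ∈ Finset.univ.filter (fun w => E w u), max 0 (val w) := by
          rw [hvv] at hle
          calc wt v ≤ max 0 (wt v) := le_max_right _ _
            _ ≤ _ := hle
        rw [hval u]
        linarith
  have key' : ∀ u : V, greedy u ↔ 0 ≤ val u := by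
    intro u
    have h := key ((Finset.univ.filter (fun w => wt u < wt w)).card + 1) u (by omega)
    constructor
    · intro hg; rw [h.1 hg]; exact (hpos u).le
    · intro hv; by_contra hng; have := h.2 hng; linarith
  -- second induction: select u ↔ greedy u
  have key2 : ∀ n : ℕ, ∀ u : V,
      (Finset.univ.filter (fun w => wt w < wt u)).card < n →
      (select u ↔ greedy u) := by
    intro n
    induction n with
    | zero => intro u hu; omega
    | succ n ih =>
      intro u hu
      rw [hsel u]
      constructor
      · rintro ⟨hv, -⟩
        exact (key' u).mpr hv
      · intro hg
        refine ⟨(key' u).mp hg, fun v hEuv hsv => ?_⟩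
        have hwv : wt v < wt u := ((hE u v).mp hEuv).2
        have hgv : greedy v := (ih v (by
          have := hcard_light u v hwv; omega)).mp hsv
        exact (hgreedy v).mp hgv u hEuv hg
  intro u
  exact key2 ((Finset.univ.filter (fun w => wt w < wt u)).card + 1) u (by omega)
end

section
/- Let G be a finite DAG with weights wt and β = β(G) the directed local independence number. Then the independent set B output by the opportunity cost algorithm satisfies β · wt(B) ≥ wt(A) for every independent set A of G, i.e., the algorithm β-approximates a maximum weight independent set. -/
/-- The opportunity cost algorithm `β`-approximates a maximum weight independent set:
if every independent subset of `{u} ∪ δ⁺(u)` has size at most `β`, then for every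
independent set `A`, `β · wt(B) ≥ wt(A)`, where `B = {u : select u}`. -/
theorem stmt_14 {V : Type*} [Fintype V] [DecidableEq V]
    (E : V → V → Prop) [DecidableRel E]
    (f : V → ℕ) (hdag : ∀ u v : V, E u v → f u < f v)
    (wt val : V → ℝ)
    (hval : ∀ u, val u = wt u - ∑ v ∈ Finset.univ.filter (fun v => E v u), max 0 (val v))
    (select : V → Prop) [DecidablePred select]
    (hsel : ∀ u, select u ↔ (0 ≤ val u ∧ ∀ v, E u v → ¬select v))
    (β : ℕ)
    (hβ : ∀ u : V, ∀ A : Finset V, (∀ x ∈ A, x = u ∨ E u x) →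
      (∀ x ∈ A, ∀ y ∈ A, x ≠ y → ¬E x y) → A.card ≤ β) :
    ∀ A : Finset V, (∀ x ∈ A, ∀ y ∈ A, x ≠ y → ¬E x y) →
      ∑ u ∈ A, wt u ≤ (β : ℝ) * ∑ u ∈ Finset.univ.filter select, wt u := by
  classical
  intro A hA
  set g : V → ℝ := fun v => max 0 (val v) with hgdef
  have hg0 : ∀ v, 0 ≤ g v := fun v => le_max_left _ _
  have hgle : ∀ v, val v ≤ g v := fun v => le_max_right _ _
  have hEself : ∀ v, ¬ E v v := fun v h => lt_irrefl _ (hdag v v h)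
  -- swap lemma
  have swap : ∀ S : Finset V,
      ∑ u ∈ S, ∑ v ∈ Finset.univ.filter (fun v => E v u), g v
      = ∑ v : V, ((S.filter (fun u => E v u)).card : ℝ) * g v := by
    intro S
    simp only [Finset.sum_filter]
    rw [Finset.sum_comm]
    refine Finset.sum_congr rfl fun v _ => ?_
    rw [← Finset.sum_filter, Finset.sum_const, nsmul_eq_mul]
  have hwtsum : ∀ S : Finset V, ∑ u ∈ S, wt u
      = ∑ u ∈ S, val u + ∑ v : V, ((S.filter (fun u => E v u)).card : ℝ) * g v := by
    intro S
    rw [← swap S, ← Finset.sum_add_distrib]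
    refine Finset.sum_congr rfl fun u _ => ?_
    have h := hval u
    have : g = fun v => max 0 (val v) := hgdef
    simp only [this]
    linarith
  -- counting function
  have hsplit : ∀ S : Finset V, ∀ v : V,
      ((S.filter (fun u => u = v ∨ E v u)).card : ℝ)
      = (if v ∈ S then (1:ℝ) else 0) + ((S.filter (fun u => E v u)).card : ℝ) := by
    intro S v
    have : S.filter (fun u => u = v ∨ E v u)
        = S.filter (fun u => u = v) ∪ S.filter (fun u => E v u) := by
      rw [Finset.filter_or]
    rw [this, Finset.card_union_of_disjoint]
    · have h1 : S.filter (fun u => u = v) = if v ∈ S then {v} else ∅ := by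
        split_ifs with hv
        · ext x; simp only [Finset.mem_filter, Finset.mem_singleton]
          constructor
          · rintro ⟨_, rfl⟩; rfl
          · rintro rfl; exact ⟨hv, rfl⟩
        · ext x; simp only [Finset.mem_filter, Finset.notMem_empty, iff_false]
          rintro ⟨hx, rfl⟩; exact hv hx
      rw [h1]
      split_ifs with hv <;> simp
    · rw [Finset.disjoint_left]
      rintro x hx hx'
      simp only [Finset.mem_filter] at hx hx'
      rcases hx with ⟨_, rfl⟩
      exact hEself _ hx'.2
  -- indicator sum
  have hind : ∀ S : Finset V, ∀ h : V → ℝ, ∑ u ∈ S, h u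
      = ∑ v : V, (if v ∈ S then (1:ℝ) else 0) * h v := by
    intro S h
    symm
    simp only [ite_mul, one_mul, zero_mul]
    rw [Finset.sum_ite_mem, Finset.univ_inter]
  -- Step A : bound wt(A)
  have hAle : ∑ u ∈ A, wt u ≤ ∑ v : V, ((A.filter (fun u => u = v ∨ E v u)).card : ℝ) * g v := by
    rw [hwtsum A]
    have h1 : ∑ u ∈ A, val u ≤ ∑ u ∈ A, g u :=
      Finset.sum_le_sum fun u _ => hgle u
    have h2 : ∑ u ∈ A, g u = ∑ v : V, (if v ∈ A then (1:ℝ) else 0) * g v := hind A g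
    calc ∑ u ∈ A, val u + ∑ v : V, ((A.filter (fun u => E v u)).card : ℝ) * g v
        ≤ ∑ v : V, (if v ∈ A then (1:ℝ) else 0) * g v
          + ∑ v : V, ((A.filter (fun u => E v u)).card : ℝ) * g v := by
          rw [← h2]; linarith
      _ = ∑ v : V, ((A.filter (fun u => u = v ∨ E v u)).card : ℝ) * g v := by
          rw [← Finset.sum_add_distrib]
          refine Finset.sum_congr rfl fun v _ => ?_
          rw [hsplit A v]; ring
  -- each count ≤ β
  have hcnt : ∀ v : V, ((A.filter (fun u => u = v ∨ E v u)).card : ℝ) ≤ (β : ℝ) := by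
    intro v
    have := hβ v (A.filter (fun u => u = v ∨ E v u))
      (fun x hx => (Finset.mem_filter.mp hx).2)
      (fun x hx y hy hxy => hA x (Finset.mem_filter.mp hx).1 y (Finset.mem_filter.mp hy).1 hxy)
    exact_mod_cast this
  have hA2 : ∑ u ∈ A, wt u ≤ (β : ℝ) * ∑ v : V, g v := by
    calc ∑ u ∈ A, wt u ≤ ∑ v : V, ((A.filter (fun u => u = v ∨ E v u)).card : ℝ) * g v := hAle
      _ ≤ ∑ v : V, (β : ℝ) * g v :=
          Finset.sum_le_sum fun v _ => mul_le_mul_of_nonneg_right (hcnt v) (hg0 v)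
      _ = (β : ℝ) * ∑ v : V, g v := by rw [Finset.mul_sum]
  -- Step B : Σ g ≤ wt(B)
  set B := Finset.univ.filter select with hBdef
  have hBval : ∀ u ∈ B, val u = g u := by
    intro u hu
    have hs : select u := (Finset.mem_filter.mp hu).2
    have := (hsel u).mp hs
    have : 0 ≤ val u := this.1
    simp only [hgdef]
    exact (max_eq_right this).symm
  have hBg : ∑ v : V, g v ≤ ∑ u ∈ B, wt u := by
    rw [hwtsum B]
    have hrw : ∑ u ∈ B, val u = ∑ v : V, (if v ∈ B then (1:ℝ) else 0) * g v := by
      rw [← hind B g]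
      exact Finset.sum_congr rfl hBval
    rw [hrw, ← Finset.sum_add_distrib]
    refine Finset.sum_le_sum fun v _ => ?_
    have hc : (if v ∈ B then (1:ℝ) else 0) + ((B.filter (fun u => E v u)).card : ℝ)
        = ((B.filter (fun u => u = v ∨ E v u)).card : ℝ) := (hsplit B v).symm
    rw [← add_mul, hc]
    rcases le_or_gt (g v) 0 with hgv | hgv
    · have : g v = 0 := le_antisymm hgv (hg0 v)
      rw [this]; simp
    · -- g v > 0 means 0 ≤ val v
      have hval0 : 0 ≤ val v := by
        by_contra h
        push_neg at h
        have : g v = 0 := max_eq_left (le_of_lt h)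
        linarith
      have hone : 1 ≤ ((B.filter (fun u => u = v ∨ E v u)).card : ℝ) := by
        have hne : (B.filter (fun u => u = v ∨ E v u)).Nonempty := by
          by_cases hs : select v
          · exact ⟨v, Finset.mem_filter.mpr ⟨Finset.mem_filter.mpr ⟨Finset.mem_univ v, hs⟩,
              Or.inl rfl⟩⟩
          · have hns := hs
            rw [hsel v] at hns
            push_neg at hns
            obtain ⟨w, hw, hsw⟩ := hns hval0
            exact ⟨w, Finset.mem_filter.mpr ⟨Finset.mem_filter.mpr ⟨Finset.mem_univ w, hsw⟩,
              Or.inr hw⟩⟩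
        have := Finset.card_pos.mpr hne
        exact_mod_cast this
      nlinarith
  calc ∑ u ∈ A, wt u ≤ (β : ℝ) * ∑ v : V, g v := hA2
    _ ≤ (β : ℝ) * ∑ u ∈ B, wt u := by
        apply mul_le_mul_of_nonneg_left hBg (by positivity)
end

section
/- For every finite DAG G and every node v with β(v) = β(G) = β ≥ 1, if wt assigns weight 1 to v, weight 1 − ε (for 0 < ε < 1) to every successor of v, and weight 0 to all other nodes, then the opportunity cost algorithm outputs a set of total weight at most 1, while the maximum weight independent set has weight at least β·(1 − ε). Hence the β approximation ratio is tight. -/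
/-- Tightness of the `β` ratio: let `v` attain `β(v) = β(G) = β ≥ 1`, give `v`
weight `1`, its successors weight `1 - ε` (with `0 < ε < 1`), and all other nodes
weight `0`.  Then the opportunity cost algorithm outputs a set of total weight at
most `1`, while some independent set has weight at least `β (1 - ε)`. -/
theorem stmt_15 {V : Type*} [Fintype V] [DecidableEq V]
    (E : V → V → Prop) [DecidableRel E]
    (f : V → ℕ) (hdag : ∀ u v : V, E u v → f u < f v)
    (β : ℕ) (hβ1 : 1 ≤ β) (v : V)
    (hβG : ∀ u : V, ∀ A : Finset V, (∀ x ∈ A, x = u ∨ E u x) →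
      (∀ x ∈ A, ∀ y ∈ A, x ≠ y → ¬E x y) → A.card ≤ β)
    (hβv : ∃ A : Finset V, (∀ x ∈ A, x = v ∨ E v x) ∧
      (∀ x ∈ A, ∀ y ∈ A, x ≠ y → ¬E x y) ∧ A.card = β)
    (ε : ℝ) (hε0 : 0 < ε) (hε1 : ε < 1)
    (wt : V → ℝ)
    (hwt : ∀ u, wt u = if u = v then 1 else if E v u then 1 - ε else 0)
    (val : V → ℝ)
    (hval : ∀ u, val u = wt u - ∑ w ∈ Finset.univ.filter (fun w => E w u), max 0 (val w))
    (select : V → Prop) [DecidablePred select]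
    (hsel : ∀ u, select u ↔ (0 ≤ val u ∧ ∀ w, E u w → ¬select w)) :
    (∑ u ∈ Finset.univ.filter select, wt u ≤ 1) ∧
    ∃ A : Finset V, (∀ x ∈ A, ∀ y ∈ A, x ≠ y → ¬E x y) ∧
      (β : ℝ) * (1 - ε) ≤ ∑ u ∈ A, wt u := by

  have hirr : ∀ u, ¬ E u u := fun u h => lt_irrefl _ (hdag u u h)
  have hwt0 : ∀ u, wt u = 0 → val u ≤ 0 := by
    intro u h
    rw [hval u, h]
    simp only [zero_sub, neg_nonpos]
    exact Finset.sum_nonneg (fun w _ => le_max_left 0 _)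
  have hvalv : val v = 1 := by
    rw [hval v, hwt v, if_pos rfl]
    have hz : ∑ w ∈ Finset.univ.filter (fun w => E w v), max 0 (val w) = 0 := by
      apply Finset.sum_eq_zero
      intro w hw
      simp only [Finset.mem_filter] at hw
      have hwv : wt w = 0 := by
        rw [hwt w, if_neg, if_neg]
        · intro hE; exact lt_asymm (hdag v w hE) (hdag w v hw.2)
        · rintro rfl; exact hirr w hw.2
      have := hwt0 w hwv
      simp [max_eq_left this]
    rw [hz]; ring
  have hsucc : ∀ u, E v u → ¬ select u := by
    intro u hEu hs
    have hne : u ≠ v := by rintro rfl; exact hirr u hEu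
    have hval_u : val u ≤ -ε := by
      rw [hval u, hwt u, if_neg hne, if_pos hEu]
      have h1 : (1:ℝ) ≤ ∑ w ∈ Finset.univ.filter (fun w => E w u), max 0 (val w) := by
        have hv : v ∈ Finset.univ.filter (fun w => E w u) := by simp [hEu]
        calc (1:ℝ) = max 0 (val v) := by rw [hvalv]; simp
          _ ≤ _ := Finset.single_le_sum (f := fun w => max 0 (val w)) (fun w _ => le_max_left 0 _) hv
      linarith
    have := ((hsel u).mp hs).1
    linarith
  constructor
  · have hle : ∀ u ∈ Finset.univ.filter select, wt u ≤ if u = v then (1:ℝ) else 0 := by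
      intro u hu
      simp only [Finset.mem_filter] at hu
      rw [hwt u]
      by_cases h : u = v
      · simp [h]
      · rw [if_neg h, if_neg h]
        by_cases hE : E v u
        · exact absurd hu.2 (hsucc u hE)
        · simp [hE]
    calc ∑ u ∈ Finset.univ.filter select, wt u
        ≤ ∑ u ∈ Finset.univ.filter select, (if u = v then (1:ℝ) else 0) :=
          Finset.sum_le_sum hle
      _ = if v ∈ Finset.univ.filter select then (1:ℝ) else 0 :=
          Finset.sum_ite_eq' (Finset.univ.filter select) v (fun _ => (1:ℝ))
      _ ≤ 1 := by split <;> norm_num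
  · obtain ⟨A, hA1, hA2, hA3⟩ := hβv
    refine ⟨A, hA2, ?_⟩
    have hb : ∀ x ∈ A, (1:ℝ) - ε ≤ wt x := by
      intro x hx
      rw [hwt x]
      rcases hA1 x hx with rfl | hE
      · simp; linarith
      · rw [if_neg, if_pos hE]
        rintro rfl; exact hirr x hE
    calc (β:ℝ) * (1-ε) = A.card • ((1:ℝ)-ε) := by rw [hA3, nsmul_eq_mul]
      _ ≤ ∑ x ∈ A, wt x := Finset.card_nsmul_le_sum A wt (1-ε) hb
end

section
/- Unweighted budget constraints approximation bound (w₁-analysis): Let G be a DAG, u a node with no predecessors, S_u a set of nodes containing u with budget k_u ≥ 1, and define w₁(v) = w(u) if v ∈ {u} ∪ δ⁺(u), w₁(v) = w(u)/k_u if v ∈ S_u \ {u}, and 0 otherwise, where w(u) > 0. Then: (a) every feasible set of bids (independent in G and containing at most k_u elements of S_u) has w₁-weight at most (β(u) + 1)·w(u); and (b) every u-maximal feasible set (a feasible set F such that either u ∈ F, or F ∪ {u} is not feasible) has w₁-weight at least w(u). -/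
/-- Unweighted budget `w₁`-analysis: with `u` a node with no predecessors in the DAG,
budget group `S_u ∋ u` with budget `k ≥ 1`, and
`w₁(v) = w(u)` on `{u} ∪ δ⁺(u)`, `w(u)/k` on `S_u \ {u}`, `0` elsewhere:
(a) every feasible set (independent and using at most `k` bids of `S_u`) has
`w₁`-weight at most `(β(u) + 1)·w(u)`;
(b) every `u`-maximal feasible set has `w₁`-weight at least `w(u)`. -/
theorem stmt_16 {V : Type*} [Fintype V] [DecidableEq V]
    (E : V → V → Prop) [DecidableRel E]
    (u : V) (hnopred : ∀ v, ¬E v u)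
    (Su : Finset V) (huS : u ∈ Su) (k : ℕ) (hk : 1 ≤ k)
    (wu : ℝ) (hwu : 0 < wu)
    (β : ℕ)
    (hβ : ∀ A : Finset V, (∀ x ∈ A, x = u ∨ E u x) →
      (∀ x ∈ A, ∀ y ∈ A, x ≠ y → ¬E x y) → A.card ≤ β)
    (w₁ : V → ℝ)
    (hw₁ : ∀ v, w₁ v = if v = u ∨ E u v then wu else if v ∈ Su then wu / k else 0) :
    (∀ F : Finset V, (∀ x ∈ F, ∀ y ∈ F, x ≠ y → ¬E x y) → (F ∩ Su).card ≤ k →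
      ∑ v ∈ F, w₁ v ≤ ((β : ℝ) + 1) * wu) ∧
    (∀ F : Finset V, (∀ x ∈ F, ∀ y ∈ F, x ≠ y → ¬E x y) → (F ∩ Su).card ≤ k →
      (u ∈ F ∨
        ¬((∀ x ∈ insert u F, ∀ y ∈ insert u F, x ≠ y → ¬E x y) ∧
          ((insert u F) ∩ Su).card ≤ k)) →
      wu ≤ ∑ v ∈ F, w₁ v) := by
  classical
  have hk' : (0:ℝ) < k := by exact_mod_cast Nat.lt_of_lt_of_le Nat.zero_lt_one hk
  have hnn : ∀ v, 0 ≤ w₁ v := by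
    intro v; rw [hw₁]
    split
    · exact hwu.le
    · split
      · positivity
      · exact le_rfl
  constructor
  · intro F hind hbud
    have hsplit : ∑ v ∈ F, w₁ v =
        ∑ v ∈ F.filter (fun v => v = u ∨ E u v), w₁ v +
        ∑ v ∈ F.filter (fun v => ¬(v = u ∨ E u v)), w₁ v :=
      (Finset.sum_filter_add_sum_filter_not F _ _).symm
    have hA : ∑ v ∈ F.filter (fun v => v = u ∨ E u v), w₁ v ≤ (β : ℝ) * wu := by
      have hcard : (F.filter (fun v => v = u ∨ E u v)).card ≤ β := by
        apply hβ
        · intro x hx; exact (Finset.mem_filter.mp hx).2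
        · intro x hx y hy hxy
          exact hind x (Finset.mem_filter.mp hx).1 y (Finset.mem_filter.mp hy).1 hxy
      calc ∑ v ∈ F.filter (fun v => v = u ∨ E u v), w₁ v
          = ∑ v ∈ F.filter (fun v => v = u ∨ E u v), wu := by
            apply Finset.sum_congr rfl
            intro v hv; rw [hw₁, if_pos (Finset.mem_filter.mp hv).2]
        _ = (F.filter (fun v => v = u ∨ E u v)).card * wu := by
            rw [Finset.sum_const, nsmul_eq_mul]
        _ ≤ (β : ℝ) * wu := by
            apply mul_le_mul_of_nonneg_right _ hwu.le
            exact_mod_cast hcard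
    have hB : ∑ v ∈ F.filter (fun v => ¬(v = u ∨ E u v)), w₁ v ≤ wu := by
      have h1 : ∑ v ∈ F.filter (fun v => ¬(v = u ∨ E u v)), w₁ v ≤
          ∑ v ∈ (F.filter (fun v => ¬(v = u ∨ E u v))).filter (fun v => v ∈ Su),
            (wu / k) := by
        conv_rhs => rw [Finset.sum_filter]
        apply Finset.sum_le_sum
        intro v hv
        rw [hw₁, if_neg (Finset.mem_filter.mp hv).2]
      have h2 : ((F.filter (fun v => ¬(v = u ∨ E u v))).filter (fun v => v ∈ Su)).card
          ≤ k := by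
        refine le_trans (Finset.card_le_card ?_) hbud
        intro v hv
        have h := Finset.mem_filter.mp hv
        exact Finset.mem_inter.mpr ⟨(Finset.mem_filter.mp h.1).1, h.2⟩
      calc ∑ v ∈ F.filter (fun v => ¬(v = u ∨ E u v)), w₁ v
          ≤ ((F.filter (fun v => ¬(v = u ∨ E u v))).filter (fun v => v ∈ Su)).card
            * (wu / k) := by
            simpa [Finset.sum_const, nsmul_eq_mul] using h1
        _ ≤ (k : ℝ) * (wu / k) := by
            apply mul_le_mul_of_nonneg_right _ (by positivity)
            exact_mod_cast h2
        _ = wu := by field_simp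
    linarith
  · intro F hind hbud hmax
    have hsum_ge : ∀ v ∈ F, w₁ v = wu → wu ≤ ∑ x ∈ F, w₁ x := by
      intro v hv hw
      calc wu = w₁ v := hw.symm
        _ ≤ ∑ x ∈ F, w₁ x := Finset.single_le_sum (fun x _ => hnn x) hv
    rcases hmax with huF | hnfeas
    · exact hsum_ge u huF (by rw [hw₁, if_pos (Or.inl rfl)])
    · by_cases huF : u ∈ F
      · exact hsum_ge u huF (by rw [hw₁, if_pos (Or.inl rfl)])
      rw [not_and_or] at hnfeas
      rcases hnfeas with hni | hcard
      · push_neg at hni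
        obtain ⟨x, hx, y, hy, hxy, hE⟩ := hni
        rw [Finset.mem_insert] at hx hy
        have hyne : y ≠ u := fun h => hnopred x (h ▸ hE)
        have hyF : y ∈ F := hy.resolve_left hyne
        have hxu : x = u := by
          rcases hx with h | hxF
          · exact h
          · exact absurd hE (hind x hxF y hyF hxy)
        exact hsum_ge y hyF (by rw [hw₁, if_pos (Or.inr (hxu ▸ hE))])
      · -- budget case: |F ∩ Su| ≥ k
        have hins : (insert u F) ∩ Su = insert u (F ∩ Su) :=
          Finset.insert_inter_of_mem huS
        have hcard' : k ≤ (F ∩ Su).card := by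
          by_contra hlt
          push_neg at hlt
          apply hcard
          rw [hins, Finset.card_insert_of_notMem
            (fun h => huF (Finset.mem_inter.mp h).1)]
          omega
        have hk1 : (1:ℝ) ≤ k := by exact_mod_cast hk
        have hdiv : wu / k ≤ wu := by
          rw [div_le_iff₀ hk']; nlinarith
        have heach : ∀ v ∈ F ∩ Su, wu / k ≤ w₁ v := by
          intro v hv
          rw [hw₁]
          split
          · exact hdiv
          · rw [if_pos (Finset.mem_inter.mp hv).2]
        calc wu = (k : ℝ) * (wu / k) := by field_simp
          _ ≤ ((F ∩ Su).card : ℝ) * (wu / k) := by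
              apply mul_le_mul_of_nonneg_right _ (by positivity)
              exact_mod_cast hcard'
          _ = ∑ v ∈ F ∩ Su, (wu / k) := by
              rw [Finset.sum_const, nsmul_eq_mul]
          _ ≤ ∑ v ∈ F ∩ Su, w₁ v := Finset.sum_le_sum heach
          _ ≤ ∑ v ∈ F, w₁ v :=
              Finset.sum_le_sum_of_subset_of_nonneg (Finset.inter_subset_left)
                (fun x _ _ => hnn x)
end
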